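/- arXiv:2509.05871 — 7 statements merged into one kernel-verified Lean document; each statement's English description precedes it below -/
import Mathlib

section
/- Let G = ℤ_{p^r} (p prime) and H any finite abelian group. Then ∑_{φ ∈ Hom(G,H)} |ker(φ)|^k = |Hom(ℤ_{p^r}, H)| + (1 - p^{-k}) · ∑_{a=1}^{r} p^{ak} · |Hom(ℤ_{p^{r-a}}, H)|. -/
set_option linter.unnecessarySimpa false

noncomputable def homEquiv (n : ℕ) (H : Type*) [AddCommGroup H] :
    (ZMod n →+ H) ≃ {h : H // n • h = 0} where
  toFun φ := ⟨φ 1, by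
    rw [← map_nsmul, nsmul_eq_mul, mul_one, ZMod.natCast_self, map_zero]⟩
  invFun h := ZMod.lift n ⟨zmultiplesHom H h.1, by
    simpa [natCast_zsmul] using h.2⟩
  left_inv φ := by
    apply AddMonoidHom.ext
    intro x
    obtain ⟨m, rfl⟩ := ZMod.intCast_surjective x
    rw [ZMod.lift_coe]
    show m • φ 1 = _
    rw [← map_zsmul, zsmul_one]
  right_inv h := by
    ext
    show ZMod.lift n ⟨zmultiplesHom H h.1, _⟩ (1 : ZMod n) = h.1
    rw [show (1 : ZMod n) = ((1:ℤ) : ZMod n) by simp, ZMod.lift_coe]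
    simp

lemma card_hom (n : ℕ) (H : Type*) [AddCommGroup H] :
    Nat.card (ZMod n →+ H) = Nat.card {h : H // n • h = 0} :=
  Nat.card_congr (homEquiv n H)

lemma card_hom_cond (m n : ℕ) (hmn : m ∣ n) (H : Type*) [AddCommGroup H] :
    Nat.card {φ : ZMod n →+ H // m • φ 1 = 0} = Nat.card (ZMod m →+ H) := by
  rw [card_hom]
  apply Nat.card_congr
  refine ((homEquiv n H).subtypeEquiv (p := fun φ => m • φ 1 = 0)
      (q := fun x => m • x.1 = 0) (fun φ => Iff.rfl)).trans ?_
  refine (Equiv.subtypeSubtypeEquivSubtypeInter (fun h : H => n • h = 0)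
      (fun h => m • h = 0)).trans (Equiv.subtypeEquivRight fun h => ?_)
  constructor
  · exact fun hh => hh.2
  · intro hh
    refine ⟨?_, hh⟩
    obtain ⟨c, rfl⟩ := hmn
    rw [mul_comm, mul_smul, hh, smul_zero]

lemma range_eq_zmultiples (n : ℕ) {H : Type*} [AddCommGroup H] (φ : ZMod n →+ H) :
    φ.range = AddSubgroup.zmultiples (φ 1) := by
  ext y
  simp only [AddMonoidHom.mem_range, AddSubgroup.mem_zmultiples_iff]
  constructor
  · rintro ⟨x, rfl⟩
    obtain ⟨m, rfl⟩ := ZMod.intCast_surjective x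
    exact ⟨m, by rw [← map_zsmul, zsmul_one]⟩
  · rintro ⟨m, rfl⟩
    exact ⟨m • 1, by rw [map_zsmul]⟩

lemma ker_mul_order (n : ℕ) {H : Type*} [AddCommGroup H] (φ : ZMod n →+ H) :
    Nat.card φ.ker * addOrderOf (φ 1) = n := by
  have h1 : Nat.card (ZMod n) = Nat.card (ZMod n ⧸ φ.ker) * Nat.card φ.ker :=
    AddSubgroup.card_eq_card_quotient_mul_card_addSubgroup φ.ker
  have h2 : Nat.card (ZMod n ⧸ φ.ker) = addOrderOf (φ 1) := by
    rw [Nat.card_congr (QuotientAddGroup.quotientKerEquivRange φ).toEquiv,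
      range_eq_zmultiples, Nat.card_zmultiples]
  rw [Nat.card_zmod] at h1
  rw [mul_comm, ← h2]
  exact h1.symm

lemma tele (x : ℝ) (k a : ℕ) :
    ∑ b ∈ Finset.Icc 1 a, (x^(b*k) - x^((b-1)*k)) = x^(a*k) - 1 := by
  induction a with
  | zero => simp
  | succ n ih =>
    rw [Finset.sum_Icc_succ_top (by omega), ih, Nat.add_sub_cancel]
    ring


/-- For `G = ℤ_{p^r}` (`p` prime) and `H` a finite abelian group,
`∑_{φ ∈ Hom(G,H)} |ker φ|^k
  = |Hom(ℤ_{p^r},H)| + (1 - p^{-k}) ⋅ ∑_{a=1}^{r} p^{ak} ⋅ |Hom(ℤ_{p^{r-a}},H)|`. -/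
theorem gamma_cyclic_to_abelian
    (p : ℕ) (hp : p.Prime) (r k : ℕ) (hk : 1 ≤ k)
    (H : Type*) [AddCommGroup H] [Fintype H]
    [Fintype (ZMod (p ^ r) →+ H)] :
    (∑ φ : ZMod (p ^ r) →+ H, ((Nat.card φ.ker : ℝ)) ^ k)
      = (Nat.card (ZMod (p ^ r) →+ H) : ℝ)
        + (1 - ((p : ℝ) ^ k)⁻¹) *
          ∑ a ∈ Finset.Icc 1 r,
            (p : ℝ) ^ (a * k) * (Nat.card (ZMod (p ^ (r - a)) →+ H) : ℝ) := by
    classical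
  have hp0 : (p : ℝ) ≠ 0 := Nat.cast_ne_zero.mpr hp.ne_zero
  have hp1 : 1 < p := hp.one_lt
  -- per-φ expansion
  have expand : ∀ φ : ZMod (p ^ r) →+ H, ((Nat.card φ.ker : ℝ)) ^ k
      = 1 + ∑ b ∈ Finset.Icc 1 r,
          (if p ^ (r - b) • φ 1 = 0 then ((p:ℝ)^(b*k) - (p:ℝ)^((b-1)*k)) else 0) := by
    intro φ
    have key := ker_mul_order (p ^ r) φ
    have hdvd : Nat.card φ.ker ∣ p ^ r := ⟨addOrderOf (φ 1), key.symm⟩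
    obtain ⟨a, ha, hcard⟩ := (Nat.dvd_prime_pow hp).mp hdvd
    have hd0 : addOrderOf (φ 1) ≠ 0 := by
      intro h0
      rw [h0, mul_zero] at key
      exact (pow_ne_zero r hp.ne_zero) key.symm
    have hcond : ∀ b ∈ Finset.Icc 1 r, (p ^ (r - b) • φ 1 = 0 ↔ b ≤ a) := by
      intro b hb
      rw [Finset.mem_Icc] at hb
      rw [← addOrderOf_dvd_iff_nsmul_eq_zero]
      constructor
      · intro hdv
        by_contra hba
        push_neg at hba
        -- a < b; then p^b ∣ p^a * d = p^r / ... derive contradiction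
        have h1 : addOrderOf (φ 1) * p ^ a = p ^ r := by rw [mul_comm, ← hcard]; exact key
        have h2 : addOrderOf (φ 1) ∣ p ^ (r - b) := hdv
        have h3 : addOrderOf (φ 1) * p ^ a ∣ p ^ (r - b) * p ^ a := mul_dvd_mul h2 dvd_rfl
        rw [h1, ← pow_add] at h3
        have h4 : r ≤ r - b + a := (Nat.pow_dvd_pow_iff_le_right hp1).mp h3
        omega
      · intro hba
        have h1 : addOrderOf (φ 1) * p ^ a = p ^ r := by rw [mul_comm, ← hcard]; exact key
        have h2 : addOrderOf (φ 1) ∣ p ^ r := ⟨p ^ a, h1.symm⟩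
        obtain ⟨c, hc, hdc⟩ := (Nat.dvd_prime_pow hp).mp h2
        have hca : c + a = r := by
          have := h1
          rw [hdc, ← pow_add] at this
          exact Nat.pow_right_injective hp.two_le this
        rw [hdc]
        exact pow_dvd_pow p (by omega)
    rw [Finset.sum_congr rfl (fun b hb => if_congr (hcond b hb) rfl rfl)]
    have hfilter : (Finset.Icc 1 r).filter (· ≤ a) = Finset.Icc 1 a := by
      ext b
      simp only [Finset.mem_filter, Finset.mem_Icc]
      omega
    rw [← Finset.sum_filter, hfilter, tele, hcard]
    push_cast
    rw [← pow_mul]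
    ring
  rw [Finset.sum_congr rfl (fun φ _ => expand φ), Finset.sum_add_distrib, Finset.sum_comm]
  congr 1
  · simp [Nat.card_eq_fintype_card]
  · rw [Finset.mul_sum]
    apply Finset.sum_congr rfl
    intro b hb
    rw [Finset.mem_Icc] at hb
    rw [← Finset.sum_filter, Finset.sum_const]
    have hcount : (Finset.univ.filter
        (fun φ : ZMod (p^r) →+ H => p ^ (r - b) • φ 1 = 0)).card
        = Nat.card (ZMod (p ^ (r - b)) →+ H) := by
      rw [← card_hom_cond (p ^ (r - b)) (p ^ r) (pow_dvd_pow p (Nat.sub_le r b)) H,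
        Nat.card_eq_fintype_card, Fintype.card_subtype]
    rw [hcount, nsmul_eq_mul]
    have hb1 : (p:ℝ) ^ (b * k) = (p:ℝ) ^ ((b - 1) * k) * (p:ℝ) ^ k := by
      rw [← pow_add]
      congr 1
      rw [← Nat.succ_mul]
      congr 1
      omega
    rw [hb1]
    have hpk : (p:ℝ) ^ k ≠ 0 := pow_ne_zero _ hp0
    field_simp
end

section
/- Let G = ℤ_{p^r} (p prime) and H a finite abelian group whose p-component has p-rank t, and let k > t. Then (1 - p^{-k})·p^{kr} ≤ ∑_{φ ∈ Hom(G,H)} |ker(φ)|^k ≤ (p^{k-t}/(p^{k-t}-1)) · p^{kr}. -/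
/-!
A homomorphism `φ : ℤ/p^r → H` is determined by `φ 1`, and if `φ 1` has order `p^j` then
`|ker φ| = p^(r-j)`. At most `|H[p^j]| ≤ p^(jt)` homomorphisms have this `j`, so the sum is at
most `∑_{j ≤ r} p^(jt) p^((r-j)k) = p^(kr) ∑_{j ≤ r} p^(-(k-t)j)`, a geometric series of ratio
`p^(t-k) < 1`. The lower bound is the term of the zero homomorphism alone.
-/

open Finset

lemma Pi.card_nsmul_eq_zero_le_of_isAddCyclic {ι : Type*} [Fintype ι] {C : ι → Type*}
    [∀ i, AddCommGroup (C i)] [∀ i, IsAddCyclic (C i)] [∀ i, Finite (C i)] {m : ℕ} (hm : 0 < m) :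
    Nat.card {x : ∀ i, C i // m • x = 0} ≤ m ^ Fintype.card ι := by
  classical
  have := fun i ↦ Fintype.ofFinite (C i)
  calc Nat.card {x : ∀ i, C i // m • x = 0}
      = Nat.card (∀ i, {c : C i // m • c = 0}) :=
        Nat.card_congr <| (Equiv.subtypeEquivRight fun _ ↦ funext_iff).trans
          (Equiv.subtypePiEquivPi (p := fun i (c : C i) ↦ m • c = 0))
    _ = ∏ i, Nat.card {c : C i // m • c = 0} := Nat.card_pi
    _ ≤ ∏ _i : ι, m := prod_le_prod' fun i _ ↦ by
        rw [Nat.card_eq_fintype_card, Fintype.card_subtype]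
        exact IsAddCyclic.card_nsmul_eq_zero_le hm
    _ = m ^ Fintype.card ι := by rw [prod_const, card_univ]

lemma card_nsmul_eq_zero_le_of_addEquiv_pi_prod {A : Type*} [AddCommGroup A]
    {ι : Type*} [Fintype ι] {C : ι → Type*}
    [∀ i, AddCommGroup (C i)] [∀ i, IsAddCyclic (C i)] [∀ i, Finite (C i)]
    {K : Type*} [AddCommGroup K] [Finite K] (e : A ≃+ (∀ i, C i) × K) {m : ℕ} (hm : 0 < m)
    (hmK : m.Coprime (Nat.card K)) :
    Nat.card {a : A // m • a = 0} ≤ m ^ Fintype.card ι := by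
  have snd_eq_zero {a : A} (ha : m • a = 0) : (e a).2 = 0 := by
    have hm : m • (e a).2 = 0 := by simpa using congrArg Prod.snd (congrArg e ha)
    exact (nsmul_eq_zero_iff_of_coprime hmK).mp ⟨hm, card_nsmul_eq_zero'⟩
  let f : {a : A // m • a = 0} → {x : ∀ i, C i // m • x = 0} := fun a ↦
    ⟨(e a).1, by simpa using congrArg Prod.fst (congrArg e a.2)⟩
  have hf : Function.Injective f := fun a b hab ↦
    Subtype.ext <| e.injective <| Prod.ext (congrArg Subtype.val hab)
      (by rw [snd_eq_zero a.2, snd_eq_zero b.2])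
  exact (Nat.card_le_card_of_injective f hf).trans (Pi.card_nsmul_eq_zero_le_of_isAddCyclic hm)

namespace ZMod

variable {n : ℕ} {A : Type*} [AddCommGroup A]

lemma zmultiples_one : AddSubgroup.zmultiples (1 : ZMod n) = ⊤ :=
  eq_top_iff.mpr fun x _ ↦ by
    obtain ⟨m, rfl⟩ := intCast_surjective x
    exact ⟨m, zsmul_one m⟩

lemma addMonoidHom_range_eq_zmultiples (φ : ZMod n →+ A) :
    φ.range = AddSubgroup.zmultiples (φ 1) := by
  rw [AddMonoidHom.range_eq_map, ← zmultiples_one, AddMonoidHom.map_zmultiples]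

lemma addMonoidHom_injective_apply_one :
    Function.Injective fun φ : ZMod n →+ A ↦ φ 1 := fun φ ψ h ↦ by
  ext x
  obtain ⟨m, rfl⟩ := intCast_surjective x
  simp only at h
  rw [← zsmul_one, map_zsmul, map_zsmul, h]

lemma card_ker_mul_addOrderOf_apply_one (φ : ZMod n →+ A) :
    Nat.card φ.ker * addOrderOf (φ 1) = n := by
  rw [← Nat.card_zmultiples, ← addMonoidHom_range_eq_zmultiples, ← AddSubgroup.index_ker,
    AddSubgroup.card_mul_index, Nat.card_zmod]

lemma addOrderOf_apply_one_dvd (φ : ZMod n →+ A) : addOrderOf (φ 1) ∣ n :=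
  (addOrderOf_map_dvd φ 1).trans (addOrderOf_one n).dvd

lemma card_nsmul_apply_one_eq_zero_le [Finite A] (m : ℕ) :
    Nat.card {φ : ZMod n →+ A // m • φ 1 = 0} ≤ Nat.card {a : A // m • a = 0} :=
  Nat.card_le_card_of_injective (fun φ ↦ ⟨φ.1 1, φ.2⟩) fun _ _ h ↦
    Subtype.ext <| addMonoidHom_injective_apply_one (congrArg Subtype.val h)

end ZMod

lemma Nat.pow_log_eq_of_dvd_prime_pow {p m r : ℕ} (hp : p.Prime) (h : m ∣ p ^ r) :
    p ^ Nat.log p m = m ∧ Nat.log p m ≤ r := by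
  obtain ⟨j, hj, rfl⟩ := (Nat.dvd_prime_pow hp).mp h
  rw [Nat.log_pow hp.one_lt]
  exact ⟨rfl, hj⟩

section PrimePower

variable {A : Type*} [AddCommGroup A] {p r : ℕ}

lemma card_ker_eq_pow_sub_log_addOrderOf (hp : p.Prime) (φ : ZMod (p ^ r) →+ A) :
    Nat.card φ.ker = p ^ (r - Nat.log p (addOrderOf (φ 1))) := by
  obtain ⟨hord, hle⟩ := Nat.pow_log_eq_of_dvd_prime_pow hp (ZMod.addOrderOf_apply_one_dvd φ)
  have h := ZMod.card_ker_mul_addOrderOf_apply_one φ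
  rw [← hord] at h
  rw [← Nat.pow_div hle hp.pos]
  exact (Nat.div_eq_of_eq_mul_left (pow_pos hp.pos _) h.symm).symm

lemma sum_card_ker_pow_le_sum_card_nsmul_eq_zero [Finite A] [Fintype (ZMod (p ^ r) →+ A)]
    (hp : p.Prime) (k : ℕ) :
    ∑ φ : ZMod (p ^ r) →+ A, (Nat.card φ.ker : ℝ) ^ k ≤
      ∑ j ∈ range (r + 1), (Nat.card {a : A // p ^ j • a = 0} : ℝ) * (p : ℝ) ^ ((r - j) * k) := by
  classical
  set g := fun φ : ZMod (p ^ r) →+ A ↦ Nat.log p (addOrderOf (φ 1))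
  have hg (φ : ZMod (p ^ r) →+ A) : p ^ g φ = addOrderOf (φ 1) ∧ g φ ≤ r :=
    Nat.pow_log_eq_of_dvd_prime_pow hp (ZMod.addOrderOf_apply_one_dvd φ)
  rw [← sum_fiberwise_of_maps_to (g := g) (t := range (r + 1))
    fun φ _ ↦ mem_range_succ_iff.mpr (hg φ).2]
  refine sum_le_sum fun j _ ↦ ?_
  have hcard : #{φ | g φ = j} ≤ Nat.card {a : A // p ^ j • a = 0} := calc
    #{φ | g φ = j} ≤ #{φ : ZMod (p ^ r) →+ A | p ^ j • φ 1 = 0} :=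
      card_le_card <| monotone_filter_right _ fun φ _ hφ ↦ by
        rw [← hφ, (hg φ).1]
        exact addOrderOf_nsmul_eq_zero _
    _ = Nat.card {φ : ZMod (p ^ r) →+ A // p ^ j • φ 1 = 0} := by
      rw [Nat.card_eq_fintype_card, Fintype.card_subtype]
    _ ≤ _ := ZMod.card_nsmul_apply_one_eq_zero_le _
  calc ∑ φ with g φ = j, (Nat.card φ.ker : ℝ) ^ k
      = ∑ φ with g φ = j, (p : ℝ) ^ ((r - j) * k) := sum_congr rfl fun φ hφ ↦ by
        have hgφ : Nat.log p (addOrderOf (φ 1)) = j := (mem_filter.mp hφ).2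
        rw [card_ker_eq_pow_sub_log_addOrderOf hp, hgφ]
        push_cast
        rw [pow_mul]
    _ = #{φ | g φ = j} * (p : ℝ) ^ ((r - j) * k) := by rw [sum_const, nsmul_eq_mul]
    _ ≤ _ := by gcongr

end PrimePower

lemma pow_card_le_sum_card_ker_pow {G A : Type*} [AddGroup G] [AddGroup A] [Fintype (G →+ A)]
    (k : ℕ) : (Nat.card G : ℝ) ^ k ≤ ∑ φ : G →+ A, (Nat.card φ.ker : ℝ) ^ k := calc
  (Nat.card G : ℝ) ^ k = (Nat.card (0 : G →+ A).ker : ℝ) ^ k := by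
    rw [AddMonoidHom.ker_zero, AddSubgroup.card_top]
  _ ≤ _ := single_le_sum (f := fun φ : G →+ A ↦ (Nat.card φ.ker : ℝ) ^ k)
    (fun _ _ ↦ by positivity) (mem_univ 0)

lemma sum_range_pow_mul_pow_le {x : ℝ} (hx : 1 < x) {t k : ℕ} (htk : t < k) (r : ℕ) :
    ∑ j ∈ range (r + 1), x ^ (j * t) * x ^ ((r - j) * k) ≤
      x ^ (k - t) / (x ^ (k - t) - 1) * x ^ (k * r) := by
  have hx0 : 0 < x := zero_lt_one.trans hx
  set c := x ^ (k - t)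
  have hc : 1 < c := one_lt_pow₀ hx (by omega)
  have hterm : ∀ j ∈ range (r + 1), x ^ (j * t) * x ^ ((r - j) * k) = x ^ (k * r) * c⁻¹ ^ j := by
    intro j hj
    obtain ⟨u, rfl⟩ := Nat.exists_eq_add_of_le (mem_range_succ_iff.mp hj)
    obtain ⟨v, rfl⟩ := Nat.exists_eq_add_of_le htk.le
    rw [inv_pow, ← pow_mul, eq_mul_inv_iff_mul_eq₀ (by positivity), ← pow_add, ← pow_add]
    congr 1
    simp only [Nat.add_sub_cancel_left]
    ring
  rw [sum_congr rfl hterm, ← mul_sum, mul_comm]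
  refine mul_le_mul_of_nonneg_right ?_ (by positivity)
  calc ∑ j ∈ range (r + 1), c⁻¹ ^ j ≤ c⁻¹ ^ 0 / (1 - c⁻¹) := by
        rw [range_eq_Ico]
        exact geom_sum_Ico_le_of_lt_one (by positivity) (inv_lt_one_of_one_lt₀ hc)
    _ = c / (c - 1) := by
        have : c - 1 ≠ 0 := by linarith
        field_simp

theorem gamma_bounds_bounded_rank_general
    (p : ℕ) (hp : p.Prime) (r k t : ℕ) (hkt : t < k)
    (H : Type*) [AddCommGroup H] [Fintype H]
    (b : Fin t → ℕ)
    (K : Type*) [AddCommGroup K] [Fintype K] (hK : ¬ p ∣ Nat.card K)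
    (e : H ≃+ (∀ i : Fin t, ZMod (p ^ b i)) × K)
    [Fintype (ZMod (p ^ r) →+ H)] :
    (1 - ((p : ℝ) ^ k)⁻¹) * (p : ℝ) ^ (k * r)
        ≤ ∑ φ : ZMod (p ^ r) →+ H, ((Nat.card φ.ker : ℝ)) ^ k
    ∧ (∑ φ : ZMod (p ^ r) →+ H, ((Nat.card φ.ker : ℝ)) ^ k)
        ≤ ((p : ℝ) ^ (k - t) / ((p : ℝ) ^ (k - t) - 1)) * (p : ℝ) ^ (k * r) := by
  have : ∀ i, NeZero (p ^ b i) := fun _ ↦ ⟨pow_ne_zero _ hp.ne_zero⟩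
  have hp_coprime : p.Coprime (Nat.card K) := (Nat.Prime.coprime_iff_not_dvd hp).mpr hK
  constructor
  · calc (1 - ((p : ℝ) ^ k)⁻¹) * (p : ℝ) ^ (k * r) ≤ (p : ℝ) ^ (k * r) :=
          mul_le_of_le_one_left (by positivity) (sub_le_self _ (by positivity))
      _ = (Nat.card (ZMod (p ^ r)) : ℝ) ^ k := by rw [Nat.card_zmod]; push_cast; ring
      _ ≤ _ := pow_card_le_sum_card_ker_pow k
  · calc ∑ φ : ZMod (p ^ r) →+ H, (Nat.card φ.ker : ℝ) ^ k
        ≤ ∑ j ∈ range (r + 1), (Nat.card {a : H // p ^ j • a = 0} : ℝ) * (p : ℝ) ^ ((r - j) * k) :=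
          sum_card_ker_pow_le_sum_card_nsmul_eq_zero hp k
      _ ≤ ∑ j ∈ range (r + 1), (p : ℝ) ^ (j * t) * (p : ℝ) ^ ((r - j) * k) := by
          gcongr with j
          have h := card_nsmul_eq_zero_le_of_addEquiv_pi_prod e (pow_pos hp.pos j)
            (hp_coprime.pow_left j)
          rw [Fintype.card_fin, ← pow_mul] at h
          exact_mod_cast h
      _ ≤ _ := sum_range_pow_mul_pow_le (by exact_mod_cast hp.one_lt) hkt r

/-- Let `G = ℤ_{p^r}` (`p` prime) and `H` a finite abelian group whose
`p`-component has `p`-rank `t` (i.e. `H ≅ (⊕_{i<t} ℤ_{p^{b_i}}) × K` with each `b_i ≥ 1`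
and `p ∤ |K|`), and let `k > t`. Then
`(1 - p^{-k})·p^{kr} ≤ ∑_{φ ∈ Hom(G,H)} |ker φ|^k ≤ (p^{k-t}/(p^{k-t}-1))·p^{kr}`. -/
theorem gamma_bounds_bounded_rank
    (p : ℕ) (hp : p.Prime) (r k t : ℕ) (hkt : t < k)
    (H : Type*) [AddCommGroup H] [Fintype H]
    (b : Fin t → ℕ) (hb : ∀ i, 1 ≤ b i)
    (K : Type*) [AddCommGroup K] [Fintype K] (hK : ¬ p ∣ Nat.card K)
    (e : H ≃+ (∀ i : Fin t, ZMod (p ^ b i)) × K)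
    [Fintype (ZMod (p ^ r) →+ H)] :
    (1 - ((p : ℝ) ^ k)⁻¹) * (p : ℝ) ^ (k * r)
        ≤ ∑ φ : ZMod (p ^ r) →+ H, ((Nat.card φ.ker : ℝ)) ^ k
    ∧ (∑ φ : ZMod (p ^ r) →+ H, ((Nat.card φ.ker : ℝ)) ^ k)
        ≤ ((p : ℝ) ^ (k - t) / ((p : ℝ) ^ (k - t) - 1)) * (p : ℝ) ^ (k * r) :=
  gamma_bounds_bounded_rank_general p hp r k t hkt H b K hK e
end

section
/- Let G = ℤ_{p^r} (p prime), H a finite abelian group of p-rank t ≥ 1, f : G → H any function, and ε > 0. Then the number of homomorphisms φ : G → H with agr(f,φ) ≥ ε is at most (p/(p-1)) · ε^{-(t+1)}. -/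
open Finset

-- bound: g * c.val / m < g
lemma aux_qlt (m g : ℕ) [NeZero m] (hg : 0 < g) (c : ZMod m) : g * c.val / m < g := by
  have hm : 0 < m := Nat.pos_of_ne_zero (NeZero.ne m)
  rw [Nat.div_lt_iff_lt_mul hm]
  exact (Nat.mul_lt_mul_left hg).mpr (ZMod.val_lt c)

lemma aux_qinj (m g : ℕ) [NeZero m] (hg : 0 < g) (c₁ c₂ : ZMod m)
    (h1 : g • c₁ = 0) (h2 : g • c₂ = 0) (h : g * c₁.val / m = g * c₂.val / m) : c₁ = c₂ := by
  have key : ∀ c : ZMod m, g • c = 0 → m ∣ g * c.val := by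
    intro c hc
    have : ((g * c.val : ℕ) : ZMod m) = 0 := by
      push_cast
      rw [ZMod.natCast_val, ZMod.cast_id, ← nsmul_eq_mul, hc]
    exact (ZMod.natCast_eq_zero_iff _ _).mp this
  have e1 := Nat.div_mul_cancel (key c₁ h1)
  have e2 := Nat.div_mul_cancel (key c₂ h2)
  have : g * c₁.val = g * c₂.val := by rw [← e1, ← e2, h]
  have := Nat.eq_of_mul_eq_mul_left hg this
  exact ZMod.val_injective m this

lemma aux_K_zero {K : Type*} [AddCommGroup K] [Fintype K] {g : ℕ}
    (hco : Nat.Coprime g (Nat.card K)) (k : K) (hk : g • k = 0) : k = 0 := by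
  have h1 : addOrderOf k ∣ g := addOrderOf_dvd_of_nsmul_eq_zero hk
  have h2 : addOrderOf k ∣ Nat.card K := addOrderOf_dvd_natCard k
  have h3 : addOrderOf k ∣ 1 := hco ▸ Nat.dvd_gcd h1 h2
  have h4 : addOrderOf k = 1 := Nat.dvd_one.mp h3
  exact AddMonoid.addOrderOf_eq_one_iff.mp h4

lemma aux_torsion_card_le (p t : ℕ) (hp : p.Prime)
    (H : Type*) [AddCommGroup H] [Fintype H]
    (b : Fin t → ℕ)
    (K : Type*) [AddCommGroup K] [Fintype K]
    (e : H ≃+ (∀ i : Fin t, ZMod (p ^ b i)) × K)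
    (g : ℕ) (hg : 0 < g) (hco : Nat.Coprime g (Nat.card K)) :
    Nat.card {a : H // g • a = 0} ≤ g ^ t := by
  haveI : ∀ i : Fin t, NeZero (p ^ b i) := fun i => ⟨pow_ne_zero _ hp.pos.ne'⟩
  have hsmul : ∀ a : H, g • a = 0 → (∀ i, g • ((e a).1 i) = 0) ∧ (e a).2 = 0 := by
    intro a ha
    have h0 : g • (e a) = 0 := by rw [← map_nsmul, ha, map_zero]
    constructor
    · intro i
      have := congrArg Prod.fst h0
      exact congrFun this i
    · exact aux_K_zero hco _ (congrArg Prod.snd h0)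
  have : Function.Injective (fun a : {a : H // g • a = 0} =>
      (fun i => (⟨g * ((e a.1).1 i).val / (p ^ b i), aux_qlt _ _ hg _⟩ : Fin g) : Fin t → Fin g)) := by
    intro a₁ a₂ h
    have h1 := hsmul a₁.1 a₁.2
    have h2 := hsmul a₂.1 a₂.2
    have : e a₁.1 = e a₂.1 := by
      ext i
      · exact aux_qinj _ _ hg _ _ (h1.1 i) (h2.1 i) (congrArg Fin.val (congrFun h i))
      · rw [h1.2, h2.2]
    exact Subtype.ext (e.injective this)
  calc Nat.card {a : H // g • a = 0} ≤ Nat.card (Fin t → Fin g) := Nat.card_le_card_of_injective _ this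
    _ = g ^ t := by simp [Nat.card_eq_fintype_card]

lemma aux_smul_one (n : ℕ) [NeZero n] (x : ZMod n) : x.val • (1 : ZMod n) = x := by
  rw [nsmul_eq_mul, mul_one, ZMod.natCast_val, ZMod.cast_id]

lemma aux_hom_apply {n : ℕ} [NeZero n] {H : Type*} [AddCommGroup H] (φ : ZMod n →+ H) (x : ZMod n) :
    φ x = x.val • φ 1 := by
  conv_lhs => rw [← aux_smul_one n x]
  rw [map_nsmul]

lemma aux_hom_count_le (n : ℕ) [NeZero n] {H : Type*} [AddCommGroup H] [Fintype H]
    {s : ℕ} (x : Fin s → ZMod n) (y : Fin s → H) (j : Fin s) :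
    Nat.card {φ : ZMod n →+ H // ∀ i, y i = φ (x i)} ≤
      Nat.card {a : H // Nat.gcd n (x j).val • a = 0} := by
  by_cases hne : Nonempty {φ : ZMod n →+ H // ∀ i, y i = φ (x i)}
  · obtain ⟨φ₀, hφ₀⟩ := hne
    set g := Nat.gcd n (x j).val with hg
    -- key: for any φ in the set, g • (φ 1 - φ₀ 1) = 0
    have key : ∀ φ : ZMod n →+ H, (∀ i, y i = φ (x i)) → g • (φ 1 - φ₀ 1) = 0 := by
      intro φ hφ
      set c := φ 1 - φ₀ 1 with hc
      have hn : (n : ℤ) • c = 0 := by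
        have h1 : ∀ ψ : ZMod n →+ H, n • ψ 1 = 0 := by
          intro ψ
          rw [← map_nsmul]
          have : n • (1 : ZMod n) = 0 := by
            rw [nsmul_eq_mul, mul_one, ZMod.natCast_self]
          rw [this, map_zero]
        rw [natCast_zsmul, hc, smul_sub, h1, h1, sub_zero]
      have hv : ((x j).val : ℤ) • c = 0 := by
        have h2 : ∀ ψ : ZMod n →+ H, (∀ i, y i = ψ (x i)) → (x j).val • ψ 1 = ψ (x j) := by
          intro ψ hψ
          rw [aux_hom_apply ψ (x j)]
        rw [natCast_zsmul, hc, smul_sub, h2 φ hφ, h2 φ₀ hφ₀, ← hφ j, ← hφ₀ j, sub_self]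
      have bez : (g : ℤ) = n * Nat.gcdA n (x j).val + (x j).val * Nat.gcdB n (x j).val :=
        Nat.gcd_eq_gcd_ab n (x j).val
      have : (g : ℤ) • c = 0 := by
        rw [bez, add_smul, mul_comm (n : ℤ), mul_comm ((x j).val : ℤ), mul_smul, mul_smul,
          hn, hv, smul_zero, smul_zero, add_zero]
      rw [← natCast_zsmul, this]
    have inj : Function.Injective (fun φ : {φ : ZMod n →+ H // ∀ i, y i = φ (x i)} =>
        (⟨φ.1 1 - φ₀ 1, key φ.1 φ.2⟩ : {a : H // g • a = 0})) := by
      intro φ ψ h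
      have h1 : φ.1 1 = ψ.1 1 := by
        have := congrArg Subtype.val h
        simpa using this
      apply Subtype.ext
      ext z
      rw [aux_hom_apply φ.1 z, aux_hom_apply ψ.1 z, h1]
    exact Nat.card_le_card_of_injective _ inj
  · rw [not_nonempty_iff] at hne
    simp [Nat.card_of_isEmpty]
open Finset

lemma aux_count_dvd (n d s : ℕ) [NeZero n] (hd : 0 < d) (hdn : d ∣ n) :
    ((univ : Finset (Fin s → ZMod n)).filter (fun x => ∀ i, d ∣ (x i).val)).card ≤ (n / d) ^ s := by
  classical
  have hlt : ∀ x : ZMod n, x.val / d < n / d := by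
    intro x
    rw [Nat.div_lt_iff_lt_mul hd, Nat.div_mul_cancel hdn]
    exact ZMod.val_lt x
  have key : ((univ : Finset (Fin s → ZMod n)).filter (fun x => ∀ i, d ∣ (x i).val)).card
      ≤ (univ : Finset (Fin s → Fin (n/d))).card := by
    apply Finset.card_le_card_of_injOn
      (fun (x : Fin s → ZMod n) => fun i => (⟨(x i).val / d, hlt (x i)⟩ : Fin (n / d)))
      (fun x _ => mem_univ _)
    intro x hx y hy hxy
    simp only [mem_coe, mem_filter] at hx hy
    funext i
    have h1 : (x i).val / d = (y i).val / d := congrArg Fin.val (congrFun hxy i)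
    have e1 := Nat.div_mul_cancel (hx.2 i)
    have e2 := Nat.div_mul_cancel (hy.2 i)
    have : (x i).val = (y i).val := by rw [← e1, ← e2, h1]
    exact ZMod.val_injective n this
  calc _ ≤ (univ : Finset (Fin s → Fin (n/d))).card := key
    _ = (n / d) ^ s := by simp [card_univ]

lemma aux_geom (p : ℕ) (hp : 2 ≤ p) (r : ℕ) :
    ∑ v ∈ range r, ((p : ℝ))⁻¹ ^ (v + 1) ≤ 1 / ((p : ℝ) - 1) := by
  set x : ℝ := (p : ℝ)⁻¹ with hx
  have hp1 : (1 : ℝ) < p := by exact_mod_cast Nat.lt_of_lt_of_le one_lt_two hp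
  have hp0 : (0 : ℝ) < p := by linarith
  have hx0 : 0 ≤ x := by positivity
  have hx1 : x < 1 := by
    rw [hx, inv_lt_one_iff₀]
    right; exact hp1
  have h1x : 0 < 1 - x := by linarith
  have hsum : ∑ v ∈ range r, x ^ (v + 1) = (∑ v ∈ range r, x ^ v) * x := by
    rw [Finset.sum_mul]
    exact Finset.sum_congr rfl fun v _ => (pow_succ x v)
  have hgeom : (∑ v ∈ range r, x ^ v) * (1 - x) = 1 - x ^ r := geom_sum_mul_neg x r
  have hxr : 0 ≤ x ^ r := by positivity
  have hge : (∑ v ∈ range r, x ^ v) ≤ 1 / (1 - x) := by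
    rw [le_div_iff₀ h1x, hgeom]
    linarith
  have hxx : x / (1 - x) = 1 / ((p : ℝ) - 1) := by
    rw [hx]
    field_simp
  calc ∑ v ∈ range r, x ^ (v + 1) = (∑ v ∈ range r, x ^ v) * x := hsum
    _ ≤ (1 / (1 - x)) * x := by
        apply mul_le_mul_of_nonneg_right hge hx0
    _ = x / (1 - x) := by ring
    _ = 1 / ((p : ℝ) - 1) := hxx
open Finset

lemma aux_layer (p t r : ℕ) (hp : p.Prime) (M : ℕ) (hM : M ∣ p ^ r) :
    ((M : ℝ)) ^ t ≤ 1 + ∑ v ∈ range r,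
      (if p ^ (v + 1) ∣ M then ((p : ℝ) ^ ((v + 1) * t) - (p : ℝ) ^ (v * t)) else 0) := by
  obtain ⟨u, hur, huM⟩ := (Nat.dvd_prime_pow hp).mp hM
  subst huM
  have hp1 : 1 < p := hp.one_lt
  have hfilter : (range r).filter (fun v => p ^ (v + 1) ∣ p ^ u) = range u := by
    ext v
    simp only [mem_filter, mem_range, Nat.pow_dvd_pow_iff_le_right hp1]
    omega
  rw [← Finset.sum_filter, hfilter, Finset.sum_range_sub (fun v => (p : ℝ) ^ (v * t))]
  have : ((p ^ u : ℕ) : ℝ) ^ t = (p : ℝ) ^ (u * t) := by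
    push_cast
    rw [← pow_mul]
  rw [this]
  simp

/-- For `G = ℤ_{p^r}` (`p` prime), `H` a finite abelian group of `p`-rank
`t ≥ 1` (i.e. `H ≅ (⊕_{i<t} ℤ_{p^{b_i}}) × K`, `b_i ≥ 1`, `p ∤ |K|`), any `f : G → H`
and `ε > 0`, the number of homomorphisms `φ` with `agr(f,φ) ≥ ε` is at most
`(p/(p-1)) ⋅ ε^{-(t+1)}`. -/
theorem list_size_bound_cyclic
    (p : ℕ) (hp : p.Prime) (r t : ℕ) (ht : 1 ≤ t) [NeZero (p ^ r)]
    (H : Type*) [AddCommGroup H] [Fintype H] [DecidableEq H]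
    (b : Fin t → ℕ) (hb : ∀ i, 1 ≤ b i)
    (K : Type*) [AddCommGroup K] [Fintype K] (hK : ¬ p ∣ Nat.card K)
    (e : H ≃+ (∀ i : Fin t, ZMod (p ^ b i)) × K)
    (f : ZMod (p ^ r) → H) (ε : ℝ) (hε : 0 < ε) :
    (Nat.card {φ : ZMod (p ^ r) →+ H //
        ε ≤ (((Finset.univ : Finset (ZMod (p ^ r))).filter
                (fun x => f x = φ x)).card : ℝ) / (Fintype.card (ZMod (p ^ r)) : ℝ)} : ℝ)
      ≤ ((p : ℝ) / ((p : ℝ) - 1)) * ε⁻¹ ^ (t + 1) := by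
  classical
  letI : Fintype (ZMod (p ^ r) →+ H) :=
    Fintype.ofInjective (fun φ => (φ : ZMod (p ^ r) → H)) DFunLike.coe_injective
  have hp1 : 1 < p := hp.one_lt
  have hp1R : (1 : ℝ) < p := by exact_mod_cast hp1
  set N : ℝ := ((p ^ r : ℕ) : ℝ) with hNdef
  have hN0 : (0 : ℝ) < N := by
    rw [hNdef]; positivity
  have hcard : (Fintype.card (ZMod (p ^ r)) : ℝ) = N := by
    rw [ZMod.card, hNdef]
  set A : (ZMod (p ^ r) →+ H) → ℕ :=
    fun φ => ((Finset.univ : Finset (ZMod (p ^ r))).filter (fun x => f x = φ x)).card with hA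
  set S : Finset (ZMod (p ^ r) →+ H) :=
    Finset.univ.filter (fun φ => ε ≤ ((A φ : ℝ)) / (Fintype.card (ZMod (p ^ r)) : ℝ)) with hS
  -- Nat.card of the subtype equals S.card
  have hm : (Nat.card {φ : ZMod (p ^ r) →+ H //
      ε ≤ (((Finset.univ : Finset (ZMod (p ^ r))).filter
              (fun x => f x = φ x)).card : ℝ) / (Fintype.card (ZMod (p ^ r)) : ℝ)} : ℝ)
      = (S.card : ℝ) := by
    rw [Nat.card_eq_fintype_card, Fintype.card_subtype]
  rw [hm]
  -- step 1/2: lower bound the moment sum on S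
  have step1 : ∀ φ ∈ S, (ε * N) ^ (t + 1) ≤ ((A φ : ℝ)) ^ (t + 1) := by
    intro φ hφ
    rw [hS, mem_filter] at hφ
    have h1 : ε ≤ (A φ : ℝ) / N := by rw [← hcard]; exact hφ.2
    have h2 : ε * N ≤ (A φ : ℝ) := (le_div_iff₀ hN0).mp h1
    exact pow_le_pow_left₀ (by positivity) h2 (t + 1)
  have step2 : (S.card : ℝ) * (ε * N) ^ (t + 1) ≤ ∑ φ ∈ S, ((A φ : ℝ)) ^ (t + 1) := by
    have := Finset.card_nsmul_le_sum S (fun φ => ((A φ : ℝ)) ^ (t + 1)) ((ε * N) ^ (t + 1)) step1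
    simpa [nsmul_eq_mul] using this
  have step3 : ∑ φ ∈ S, ((A φ : ℝ)) ^ (t + 1) ≤ ∑ φ : ZMod (p ^ r) →+ H, ((A φ : ℝ)) ^ (t + 1) := by
    apply Finset.sum_le_sum_of_subset_of_nonneg (Finset.filter_subset _ _)
    intro φ _ _
    positivity
  -- moment identity
  have hAB : ∀ φ : ZMod (p ^ r) →+ H, (A φ) ^ (t + 1) =
      ((Finset.univ : Finset (Fin (t + 1) → ZMod (p ^ r))).filter
        (fun x => ∀ i, f (x i) = φ (x i))).card := by
    intro φ
    rw [hA]
    calc ((Finset.univ : Finset (ZMod (p ^ r))).filter (fun x => f x = φ x)).card ^ (t + 1)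
        = (Fintype.card {x : ZMod (p ^ r) // f x = φ x}) ^ (t + 1) := by
          rw [Fintype.card_subtype]
      _ = Fintype.card (∀ _ : Fin (t + 1), {x : ZMod (p ^ r) // f x = φ x}) := by
          rw [Fintype.card_pi]
          simp
      _ = Fintype.card {x : Fin (t + 1) → ZMod (p ^ r) // ∀ i, f (x i) = φ (x i)} :=
          (Fintype.card_congr (Equiv.subtypePiEquivPi
            (p := fun _ y => f y = φ y))).symm
      _ = _ := Fintype.card_subtype _
  -- define C and swap
  set C : (Fin (t + 1) → ZMod (p ^ r)) → ℕ := fun x =>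
    ((Finset.univ : Finset (ZMod (p ^ r) →+ H)).filter (fun φ => ∀ i, f (x i) = φ (x i))).card
    with hC
  have swap : ∑ φ : ZMod (p ^ r) →+ H, (A φ) ^ (t + 1)
      = ∑ x : Fin (t + 1) → ZMod (p ^ r), C x := by
    simp_rw [hAB, hC, Finset.card_filter]
    rw [Finset.sum_comm]
  -- min of gcds
  set M : (Fin (t + 1) → ZMod (p ^ r)) → ℕ := fun x =>
    Finset.univ.inf' ⟨0, Finset.mem_univ 0⟩ (fun i => Nat.gcd (p ^ r) ((x i)).val) with hM
  have hMdvd : ∀ x, M x ∣ p ^ r := by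
    intro x
    obtain ⟨j, _, hj⟩ := Finset.exists_mem_eq_inf' (⟨0, Finset.mem_univ 0⟩)
      (fun i => Nat.gcd (p ^ r) ((x i)).val)
    have hMx : M x = Nat.gcd (p ^ r) ((x j)).val := hj
    rw [hMx]
    exact Nat.gcd_dvd_left _ _
  have hMpos : ∀ x, 0 < M x := by
    intro x
    obtain ⟨j, _, hj⟩ := Finset.exists_mem_eq_inf' (⟨0, Finset.mem_univ 0⟩)
      (fun i => Nat.gcd (p ^ r) ((x i)).val)
    have hMx : M x = Nat.gcd (p ^ r) ((x j)).val := hj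
    rw [hMx]
    exact Nat.gcd_pos_of_pos_left _ (Nat.pos_of_ne_zero (NeZero.ne (p ^ r)))
  have step4 : ∀ x : Fin (t + 1) → ZMod (p ^ r), C x ≤ (M x) ^ t := by
    intro x
    obtain ⟨j, _, hj⟩ := Finset.exists_mem_eq_inf' (⟨0, Finset.mem_univ 0⟩)
      (fun i => Nat.gcd (p ^ r) ((x i)).val)
    set g := Nat.gcd (p ^ r) ((x j)).val with hg
    have hgpos : 0 < g := Nat.gcd_pos_of_pos_left _ (Nat.pos_of_ne_zero (NeZero.ne (p ^ r)))
    have hco : Nat.Coprime g (Nat.card K) := by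
      have h1 : Nat.Coprime p (Nat.card K) := (Nat.Prime.coprime_iff_not_dvd hp).mpr hK
      have h2 : Nat.Coprime (p ^ r) (Nat.card K) := Nat.Coprime.pow_left r h1
      exact Nat.Coprime.coprime_dvd_left (Nat.gcd_dvd_left _ _) h2
    calc C x = Nat.card {φ : ZMod (p ^ r) →+ H // ∀ i, f (x i) = φ (x i)} := by
          rw [Nat.card_eq_fintype_card, Fintype.card_subtype, hC]
      _ ≤ Nat.card {a : H // g • a = 0} := aux_hom_count_le (p ^ r) x (fun i => f (x i)) j
      _ ≤ g ^ t := aux_torsion_card_le p t hp H b K e g hgpos hco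
      _ = (M x) ^ t := by
          have hMx : M x = g := hj
          rw [hMx]
  -- combine to real bound over tuples
  have main1 : (S.card : ℝ) * (ε * N) ^ (t + 1) ≤
      ∑ x : Fin (t + 1) → ZMod (p ^ r), ((M x : ℝ)) ^ t := by
    refine le_trans (le_trans step2 step3) ?_
    have h1 : ∑ φ : ZMod (p ^ r) →+ H, ((A φ : ℝ)) ^ (t + 1)
        = ((∑ φ : ZMod (p ^ r) →+ H, (A φ) ^ (t + 1) : ℕ) : ℝ) := by
      push_cast
      rfl
    rw [h1, swap]
    push_cast
    apply Finset.sum_le_sum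
    intro x _
    exact_mod_cast Nat.cast_le.mpr (step4 x)
  -- layer cake bound
  have step5 : ∑ x : Fin (t + 1) → ZMod (p ^ r), ((M x : ℝ)) ^ t ≤
      N ^ (t + 1) + ∑ v ∈ range r,
        ((((Finset.univ : Finset (Fin (t + 1) → ZMod (p ^ r))).filter
            (fun x => p ^ (v + 1) ∣ M x)).card : ℝ)
          * ((p : ℝ) ^ ((v + 1) * t) - (p : ℝ) ^ (v * t))) := by
    calc ∑ x : Fin (t + 1) → ZMod (p ^ r), ((M x : ℝ)) ^ t
        ≤ ∑ x : Fin (t + 1) → ZMod (p ^ r), (1 + ∑ v ∈ range r,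
            (if p ^ (v + 1) ∣ M x then ((p : ℝ) ^ ((v + 1) * t) - (p : ℝ) ^ (v * t)) else 0)) := by
          apply Finset.sum_le_sum
          intro x _
          exact aux_layer p t r hp (M x) (hMdvd x)
      _ = (Fintype.card (Fin (t + 1) → ZMod (p ^ r)) : ℝ) + ∑ v ∈ range r,
            ∑ x : Fin (t + 1) → ZMod (p ^ r),
            (if p ^ (v + 1) ∣ M x then ((p : ℝ) ^ ((v + 1) * t) - (p : ℝ) ^ (v * t)) else 0) := by
          rw [Finset.sum_add_distrib, Finset.sum_const, Finset.sum_comm]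
          simp [card_univ, nsmul_eq_mul]
      _ = N ^ (t + 1) + ∑ v ∈ range r,
            ((((Finset.univ : Finset (Fin (t + 1) → ZMod (p ^ r))).filter
                (fun x => p ^ (v + 1) ∣ M x)).card : ℝ)
              * ((p : ℝ) ^ ((v + 1) * t) - (p : ℝ) ^ (v * t))) := by
          congr 1
          · rw [Fintype.card_pi]
            simp only [ZMod.card, Finset.prod_const, Finset.card_univ, Fintype.card_fin, hNdef]
            push_cast
            ring
          · apply Finset.sum_congr rfl
            intro v _
            rw [← Finset.sum_filter, Finset.sum_const, nsmul_eq_mul]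
  -- count tuples with high divisibility
  have countD : ∀ v ∈ range r,
      ((((Finset.univ : Finset (Fin (t + 1) → ZMod (p ^ r))).filter
          (fun x => p ^ (v + 1) ∣ M x)).card : ℝ)
        * ((p : ℝ) ^ ((v + 1) * t) - (p : ℝ) ^ (v * t)))
      ≤ N ^ (t + 1) * ((p : ℝ)⁻¹) ^ (v + 1) := by
    intro v hv
    rw [Finset.mem_range] at hv
    have hv1 : v + 1 ≤ r := hv
    -- card bound
    have hsub : ((Finset.univ : Finset (Fin (t + 1) → ZMod (p ^ r))).filter
        (fun x => p ^ (v + 1) ∣ M x)) ⊆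
        ((Finset.univ : Finset (Fin (t + 1) → ZMod (p ^ r))).filter
        (fun x => ∀ i, p ^ (v + 1) ∣ (x i).val)) := by
      intro x hx
      rw [Finset.mem_filter] at hx ⊢
      refine ⟨Finset.mem_univ _, fun i => ?_⟩
      have hle : p ^ (v + 1) ≤ M x := Nat.le_of_dvd (hMpos x) hx.2
      have hinf : M x ≤ Nat.gcd (p ^ r) ((x i)).val := Finset.inf'_le _ (Finset.mem_univ i)
      obtain ⟨u, hur, hu⟩ := (Nat.dvd_prime_pow hp).mp (Nat.gcd_dvd_left (p ^ r) ((x i)).val)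
      have h3 : p ^ (v + 1) ≤ p ^ u := by
        rw [← hu]; exact le_trans hle hinf
      have h4 : v + 1 ≤ u := (Nat.pow_le_pow_iff_right hp1).mp h3
      have h5 : p ^ (v + 1) ∣ Nat.gcd (p ^ r) ((x i)).val := by
        rw [hu]; exact pow_dvd_pow p h4
      exact dvd_trans h5 (Nat.gcd_dvd_right _ _)
    have hcount : (((Finset.univ : Finset (Fin (t + 1) → ZMod (p ^ r))).filter
        (fun x => p ^ (v + 1) ∣ M x)).card) ≤ (p ^ (r - (v + 1))) ^ (t + 1) := by
      calc _ ≤ (((Finset.univ : Finset (Fin (t + 1) → ZMod (p ^ r))).filter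
            (fun x => ∀ i, p ^ (v + 1) ∣ (x i).val)).card) := Finset.card_le_card hsub
        _ ≤ (p ^ r / p ^ (v + 1)) ^ (t + 1) :=
            aux_count_dvd (p ^ r) (p ^ (v + 1)) (t + 1)
              (Nat.pow_pos hp.pos) (pow_dvd_pow p hv1)
        _ = (p ^ (r - (v + 1))) ^ (t + 1) := by rw [Nat.pow_div hv1 hp.pos]
    -- real arithmetic per term
    have hdiffpos : (0 : ℝ) ≤ (p : ℝ) ^ ((v + 1) * t) - (p : ℝ) ^ (v * t) := by
      have : (p : ℝ) ^ (v * t) ≤ (p : ℝ) ^ ((v + 1) * t) :=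
        pow_le_pow_right₀ (le_of_lt hp1R) (by nlinarith)
      linarith
    have h6 : ((((Finset.univ : Finset (Fin (t + 1) → ZMod (p ^ r))).filter
          (fun x => p ^ (v + 1) ∣ M x)).card : ℝ)
        * ((p : ℝ) ^ ((v + 1) * t) - (p : ℝ) ^ (v * t)))
        ≤ ((p : ℝ) ^ ((r - (v + 1)) * (t + 1))) * ((p : ℝ) ^ ((v + 1) * t)) := by
      have hc : ((((Finset.univ : Finset (Fin (t + 1) → ZMod (p ^ r))).filter
          (fun x => p ^ (v + 1) ∣ M x)).card : ℝ)) ≤ (p : ℝ) ^ ((r - (v + 1)) * (t + 1)) := by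
        rw [pow_mul]
        exact_mod_cast Nat.cast_le.mpr hcount
      have hd : (p : ℝ) ^ ((v + 1) * t) - (p : ℝ) ^ (v * t) ≤ (p : ℝ) ^ ((v + 1) * t) := by
        have : (0 : ℝ) ≤ (p : ℝ) ^ (v * t) := by positivity
        linarith
      exact mul_le_mul hc hd hdiffpos (by positivity)
    refine le_trans h6 (le_of_eq ?_)
    have hsplit : r * (t + 1) = (r - (v + 1)) * (t + 1) + (v + 1) * t + (v + 1) := by
      obtain ⟨w, hw⟩ : ∃ w, r = w + (v + 1) := ⟨r - (v + 1), by omega⟩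
      subst hw
      rw [Nat.add_sub_cancel]
      ring
    have hp0R : (p : ℝ) ≠ 0 := by positivity
    rw [hNdef]
    push_cast
    rw [← pow_mul, hsplit, pow_add, pow_add, inv_pow]
    field_simp
  -- geometric series total
  have geom_total : ∑ v ∈ range r, N ^ (t + 1) * ((p : ℝ)⁻¹) ^ (v + 1)
      ≤ N ^ (t + 1) * (1 / ((p : ℝ) - 1)) := by
    rw [← Finset.mul_sum]
    exact mul_le_mul_of_nonneg_left (aux_geom p hp.two_le r) (by positivity)
  have final : (S.card : ℝ) * (ε * N) ^ (t + 1) ≤ ((p : ℝ) / ((p : ℝ) - 1)) * N ^ (t + 1) := by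
    have h7 : ∑ v ∈ range r,
        ((((Finset.univ : Finset (Fin (t + 1) → ZMod (p ^ r))).filter
            (fun x => p ^ (v + 1) ∣ M x)).card : ℝ)
          * ((p : ℝ) ^ ((v + 1) * t) - (p : ℝ) ^ (v * t)))
        ≤ N ^ (t + 1) * (1 / ((p : ℝ) - 1)) :=
      le_trans (Finset.sum_le_sum countD) geom_total
    have h8 := le_trans main1 (le_trans step5 (by linarith : N ^ (t + 1) + ∑ v ∈ range r,
        ((((Finset.univ : Finset (Fin (t + 1) → ZMod (p ^ r))).filter
            (fun x => p ^ (v + 1) ∣ M x)).card : ℝ)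
          * ((p : ℝ) ^ ((v + 1) * t) - (p : ℝ) ^ (v * t)))
        ≤ N ^ (t + 1) + N ^ (t + 1) * (1 / ((p : ℝ) - 1))))
    have hpm1 : (0 : ℝ) < (p : ℝ) - 1 := by linarith
    have h9 : N ^ (t + 1) + N ^ (t + 1) * (1 / ((p : ℝ) - 1))
        = ((p : ℝ) / ((p : ℝ) - 1)) * N ^ (t + 1) := by
      field_simp
      ring
    linarith
  -- divide through
  have hpow : (0 : ℝ) < (ε * N) ^ (t + 1) := by positivity
  rw [← mul_le_mul_iff_of_pos_right hpow]
  calc (S.card : ℝ) * (ε * N) ^ (t + 1)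
      ≤ ((p : ℝ) / ((p : ℝ) - 1)) * N ^ (t + 1) := final
    _ = (p : ℝ) / ((p : ℝ) - 1) * ε⁻¹ ^ (t + 1) * (ε * N) ^ (t + 1) := by
        rw [mul_pow]
        have hinv : ε⁻¹ ^ (t + 1) * ε ^ (t + 1) = 1 := by
          rw [← mul_pow, inv_mul_cancel₀ (ne_of_gt hε), one_pow]
        calc ((p : ℝ) / ((p : ℝ) - 1)) * N ^ (t + 1)
            = ((p : ℝ) / ((p : ℝ) - 1)) * (ε⁻¹ ^ (t + 1) * ε ^ (t + 1)) * N ^ (t + 1) := by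
              rw [hinv, mul_one]
          _ = (p : ℝ) / ((p : ℝ) - 1) * ε⁻¹ ^ (t + 1) * (ε ^ (t + 1) * N ^ (t + 1)) := by ring
end

section
/- Let G and H be finite cyclic groups and k ≥ 3. Then |G|^k ≤ ∑_{φ ∈ Hom(G,H)} |ker(φ)|^k ≤ |G|^k · ζ(k-1)², where ζ(s) = ∏_p (1 - p^{-s})^{-1} is the Riemann zeta function (Euler product over all primes). -/
/-!
If `g` generates `G`, then `φ : G →* H` is determined by `φ g` and `|ker φ| = |G| / ord (φ g)`,
so the sum is `|G|^k ∑_φ ord(φ g)^{-k} ≤ |G|^k ∑_{h ∈ H} ord(h)^{-k}`. In the cyclic group `H`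
at most `d` elements have order `d`, so the last sum is at most `∑_d d^{1-k} = ζ(k-1) ≤ ζ(k-1)²`.
The lower bound is the contribution of the trivial homomorphism.
-/

open Finset

theorem tprod_primes_inv_one_sub_inv_pow {j : ℕ} (hj : 1 < j) :
    ∏' p : Nat.Primes, (1 - (((p : ℕ) : ℝ) ^ j)⁻¹)⁻¹ = ∑' n : ℕ, ((n : ℝ) ^ j)⁻¹ := by
  let f : ℕ →*₀ ℝ := invMonoidWithZeroHom.comp
    ((powMonoidWithZeroHom (by omega : j ≠ 0)).comp (Nat.castRingHom ℝ).toMonoidWithZeroHom)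
  have hf : ⇑f = fun n : ℕ => ((n : ℝ) ^ j)⁻¹ := rfl
  have hsummable : Summable fun n : ℕ => ‖f n‖ := by
    simpa [hf, one_div] using Real.summable_one_div_nat_pow.mpr hj
  simpa [hf] using EulerProduct.eulerProduct_completely_multiplicative_tprod hsummable

namespace IsCyclic

variable {H : Type*} [Group H] [Fintype H] [IsCyclic H]

theorem card_filter_orderOf_eq_le (d : ℕ) :
    #{h : H | orderOf h = d} ≤ d := by
  classical
  by_cases hd : d ∣ Fintype.card H
  · rw [IsCyclic.card_orderOf_eq_totient hd]
    exact Nat.totient_le d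
  · have hempty : ({h : H | orderOf h = d} : Finset H) = ∅ :=
      filter_eq_empty_iff.mpr <| by rintro h - rfl; exact hd orderOf_dvd_card
    simp [hempty]

theorem sum_inv_orderOf_pow_succ_le_tsum {j : ℕ} (hj : 1 < j) :
    ∑ h : H, ((orderOf h : ℝ) ^ (j + 1))⁻¹ ≤ ∑' n : ℕ, ((n : ℝ) ^ j)⁻¹ := by
  classical
  have hsummable : Summable fun n : ℕ => ((n : ℝ) ^ j)⁻¹ := by
    simpa [one_div] using Real.summable_one_div_nat_pow.mpr hj
  rw [sum_comp (fun d : ℕ => ((d : ℝ) ^ (j + 1))⁻¹) orderOf]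
  calc ∑ d ∈ univ.image orderOf, #{h : H | orderOf h = d} • ((d : ℝ) ^ (j + 1))⁻¹
      ≤ ∑ d ∈ univ.image (orderOf : H → ℕ), (d : ℝ) * ((d : ℝ) ^ (j + 1))⁻¹ := by
        gcongr with d
        rw [nsmul_eq_mul]
        gcongr
        exact_mod_cast card_filter_orderOf_eq_le d
    _ = ∑ d ∈ univ.image (orderOf : H → ℕ), ((d : ℝ) ^ j)⁻¹ := by
        refine sum_congr rfl fun d hd => ?_
        obtain ⟨h, -, rfl⟩ := mem_image.mp hd
        have : (orderOf h : ℝ) ≠ 0 := by exact_mod_cast (orderOf_pos h).ne'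
        field_simp
        ring
    _ ≤ ∑' n : ℕ, ((n : ℝ) ^ j)⁻¹ := hsummable.sum_le_tsum _ fun _ _ => by positivity

end IsCyclic

namespace MonoidHom

variable {G H : Type*} [Group G] [Group H] {g : G}

theorem card_ker_mul_orderOf_apply (hg : Subgroup.zpowers g = ⊤) (φ : G →* H) :
    Nat.card φ.ker * orderOf (φ g) = Nat.card G := by
  have hrange : φ.range = Subgroup.zpowers (φ g) := by
    rw [← map_zpowers, hg, ← range_eq_map]
  rw [← φ.ker.card_mul_index, Subgroup.index_ker, hrange, Nat.card_zpowers]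

theorem apply_injective_of_zpowers_eq_top (hg : Subgroup.zpowers g = ⊤) :
    Function.Injective fun φ : G →* H => φ g := fun _ _ h =>
  eq_of_eqOn_dense (s := {g}) (by rw [← Subgroup.zpowers_eq_closure, hg]) (by simpa using h)

theorem pow_card_le_sum_card_ker_pow [Fintype (G →* H)] (k : ℕ) :
    (Nat.card G : ℝ) ^ k ≤ ∑ φ : G →* H, (Nat.card φ.ker : ℝ) ^ k := by
  calc (Nat.card G : ℝ) ^ k = (Nat.card (1 : G →* H).ker : ℝ) ^ k := by
        rw [ker_one, Subgroup.card_top]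
    _ ≤ _ := single_le_sum (f := fun φ : G →* H => (Nat.card φ.ker : ℝ) ^ k)
        (fun _ _ => by positivity) (mem_univ 1)

theorem sum_card_ker_pow_succ_le [Fintype H] [IsCyclic H] [Fintype (G →* H)]
    (hg : Subgroup.zpowers g = ⊤) {j : ℕ} (hj : 1 < j) :
    ∑ φ : G →* H, (Nat.card φ.ker : ℝ) ^ (j + 1)
      ≤ (Nat.card G : ℝ) ^ (j + 1) * ∑' n : ℕ, ((n : ℝ) ^ j)⁻¹ := by
  have hker (φ : G →* H) : (Nat.card φ.ker : ℝ) = Nat.card G / orderOf (φ g) := by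
    rw [eq_div_iff (by exact_mod_cast (orderOf_pos (φ g)).ne'),
      ← φ.card_ker_mul_orderOf_apply hg, Nat.cast_mul]
  let evalAt : (G →* H) ↪ H := ⟨fun φ => φ g, apply_injective_of_zpowers_eq_top hg⟩
  calc ∑ φ : G →* H, (Nat.card φ.ker : ℝ) ^ (j + 1)
      = (Nat.card G : ℝ) ^ (j + 1) * ∑ h ∈ univ.map evalAt, ((orderOf h : ℝ) ^ (j + 1))⁻¹ := by
        simp only [sum_map, hker, div_eq_mul_inv, mul_pow, inv_pow, mul_sum]
        rfl
    _ ≤ (Nat.card G : ℝ) ^ (j + 1) * ∑ h : H, ((orderOf h : ℝ) ^ (j + 1))⁻¹ := by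
        gcongr
        exact subset_univ _
    _ ≤ _ := by
        gcongr
        exact IsCyclic.sum_inv_orderOf_pow_succ_le_tsum hj

end MonoidHom

theorem gamma_bounds_cyclic_general
    {G H : Type*} [CommGroup G] [CommGroup H] [Fintype H]
    (hG : IsCyclic G) (hH : IsCyclic H)
    [Fintype (G →* H)] (k : ℕ) (hk : 3 ≤ k) :
    ((Nat.card G : ℝ)) ^ k ≤ (∑ φ : G →* H, ((Nat.card φ.ker : ℝ)) ^ k)
    ∧ (∑ φ : G →* H, ((Nat.card φ.ker : ℝ)) ^ k)
        ≤ ((Nat.card G : ℝ)) ^ k *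
            (∏' p : Nat.Primes, (1 - (((p : ℕ) : ℝ) ^ (k - 1))⁻¹)⁻¹) ^ 2 := by
  obtain ⟨g, hg⟩ := isCyclic_iff_exists_zpowers_eq_top.mp hG
  obtain ⟨j, rfl⟩ : ∃ j, k = j + 1 := ⟨k - 1, by omega⟩
  have hj : 1 < j := by omega
  have hzeta_one_le : 1 ≤ ∑' n : ℕ, ((n : ℝ) ^ j)⁻¹ := by
    simpa using (Real.summable_one_div_nat_pow.mpr hj).le_tsum 1 fun _ _ => by positivity
  refine ⟨MonoidHom.pow_card_le_sum_card_ker_pow _, ?_⟩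
  rw [Nat.add_sub_cancel, tprod_primes_inv_one_sub_inv_pow hj]
  calc _ ≤ (Nat.card G : ℝ) ^ (j + 1) * ∑' n : ℕ, ((n : ℝ) ^ j)⁻¹ :=
        MonoidHom.sum_card_ker_pow_succ_le hg hj
    _ ≤ _ := by gcongr; nlinarith

/-- For finite cyclic groups `G, H` and `k ≥ 3`,
`|G|^k ≤ ∑_{φ ∈ Hom(G,H)} |ker φ|^k ≤ |G|^k ⋅ ζ(k-1)²`, where
`ζ(s) = ∏_p (1 - p^{-s})⁻¹` is the Riemann zeta function (Euler product over primes). -/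
theorem gamma_bounds_cyclic
    {G H : Type*} [CommGroup G] [CommGroup H] [Fintype G] [Fintype H]
    (hG : IsCyclic G) (hH : IsCyclic H)
    [Fintype (G →* H)] (k : ℕ) (hk : 3 ≤ k) :
    ((Nat.card G : ℝ)) ^ k ≤ (∑ φ : G →* H, ((Nat.card φ.ker : ℝ)) ^ k)
    ∧ (∑ φ : G →* H, ((Nat.card φ.ker : ℝ)) ^ k)
        ≤ ((Nat.card G : ℝ)) ^ k *
            (∏' p : Nat.Primes, (1 - (((p : ℕ) : ℝ) ^ (k - 1))⁻¹)⁻¹) ^ 2 :=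
  gamma_bounds_cyclic_general hG hH k hk
end

section
/- Let G be a finite group and f : G → G any function. For a tuple x⃗ ∈ G^k, let Stab(x⃗) = {φ ∈ Aut(G) : φ(xᵢ)=xᵢ ∀i} and G_{x⃗} = {(φ(x₁),...,φ(x_k)) : φ ∈ Aut(G)}. Then ∑_{φ ∈ Aut(G)} agr(f,φ)^k = E_{x⃗ ∼ G^k}[ 1[f(x⃗) ∈ G_{x⃗}] · |Stab(x⃗)| ]. -/
/-!
Raising the agreement count `#{a | f a = φ a}` to the `k`-th power counts the tuples `x⃗ ∈ G^k`
on which `f` and `φ` agree coordinatewise. Swapping the order of summation, the sum over `φ`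
becomes a sum over `x⃗` of the number of automorphisms `φ` with `φ • x⃗ = f(x⃗)`. When such a `φ`
exists, these automorphisms form a left coset of the stabilizer of `x⃗`, so there are exactly
`|Stab(x⃗)|` of them.
-/

open Finset

theorem Finset.card_filter_forall_pi {α ι : Type*} [Fintype α] [Fintype ι] [DecidableEq ι]
    (p : α → Prop) [DecidablePred p] [DecidablePred fun x : ι → α => ∀ i, p (x i)] :
    #{x : ι → α | ∀ i, p (x i)} = #{a | p a} ^ Fintype.card ι := by
  have filter_eq_piFinset :
      ({x : ι → α | ∀ i, p (x i)} : Finset (ι → α)) = Fintype.piFinset fun _ => {a | p a} := by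
    ext x
    simp
  rw [filter_eq_piFinset, Fintype.card_piFinset, prod_const, card_univ]

namespace MulAction

variable {H α : Type*} [Group H] [MulAction H α]

theorem card_smul_eq_eq_card_stabilizer {a b : α} {g₀ : H} (h : g₀ • a = b) :
    Nat.card {g : H // g • a = b} = Nat.card (stabilizer H a) :=
  Nat.card_congr
    { toFun g := ⟨g₀⁻¹ * g, by rw [mem_stabilizer_iff, mul_smul, g.2, ← h, inv_smul_smul]⟩
      invFun s := ⟨g₀ * s, by rw [mul_smul, s.2.out, h]⟩
      left_inv g := by simp
      right_inv s := by simp }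

theorem card_filter_smul_eq [Fintype H] [DecidableEq α] (a b : α) :
    #{g : H | g • a = b} = if ∃ g : H, g • a = b then Nat.card (stabilizer H a) else 0 := by
  split_ifs with h
  · obtain ⟨g₀, hg₀⟩ := h
    rw [← card_smul_eq_eq_card_stabilizer hg₀, Nat.card_eq_fintype_card, Fintype.card_subtype]
  · rw [card_eq_zero, filter_eq_empty_iff]
    exact fun g _ hg => h ⟨g, hg⟩

end MulAction

theorem MulAut.card_filter_forall_apply_eq {G ι : Type*} [Monoid G] [Fintype (MulAut G)]
    [DecidableEq (ι → G)] (x y : ι → G) [DecidablePred fun φ : MulAut G => ∀ i, y i = φ (x i)] :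
    #{φ : MulAut G | ∀ i, y i = φ (x i)} =
      if ∃ φ : MulAut G, ∀ i, y i = φ (x i) then
        Nat.card {φ : MulAut G // ∀ i, φ (x i) = x i} else 0 := by
  have agree_iff (φ : MulAut G) : (∀ i, y i = φ (x i)) ↔ φ • x = y := by
    simp [funext_iff, eq_comm]
  have stabilizer_card : Nat.card {φ : MulAut G // ∀ i, φ (x i) = x i} =
      Nat.card (MulAction.stabilizer (MulAut G) x) :=
    Nat.card_congr (Equiv.subtypeEquivRight fun φ => by simp [funext_iff])
  simp only [agree_iff, stabilizer_card]
  exact MulAction.card_filter_smul_eq x y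

/-- For a finite group `G`, `f : G → G` and `k`,
`∑_{φ ∈ Aut(G)} agr(f,φ)^k` equals the expectation over a uniform tuple `x⃗ ∈ G^k` of
`1[f(x⃗) ∈ G_{x⃗}] ⋅ |Stab(x⃗)|`, where `G_{x⃗} = {(φ(x₁),…,φ(x_k)) : φ ∈ Aut(G)}` and
`Stab(x⃗)` is the pointwise stabilizer of `x⃗` in `Aut(G)`. -/
theorem sum_aut_agreement_pow_eq_expectation
    {G : Type*} [Group G] [Fintype G] [DecidableEq G] [Fintype (MulAut G)]
    (f : G → G) (k : ℕ) :
    (∑ φ : MulAut G,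
        ((((Finset.univ : Finset G).filter (fun x => f x = φ x)).card : ℝ) /
          (Fintype.card G : ℝ)) ^ k)
      = (∑ x : Fin k → G,
          (if (∃ φ : MulAut G, ∀ i, f (x i) = φ (x i)) then
              (Nat.card {φ : MulAut G // ∀ i, φ (x i) = x i} : ℝ)
            else 0)) / (Fintype.card (Fin k → G) : ℝ) := by
  calc _ = (∑ φ : MulAut G, (#{x : Fin k → G | ∀ i, f (x i) = φ (x i)} : ℝ)) /
        (Fintype.card G : ℝ) ^ k := by
        simp only [div_pow, ← sum_div]
        congr 1
        refine sum_congr rfl fun φ _ => ?_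
        have tuples := card_filter_forall_pi (ι := Fin k) (fun a => f a = φ a)
        rw [Fintype.card_fin] at tuples
        exact_mod_cast tuples.symm
    _ = (∑ x : Fin k → G, (#{φ : MulAut G | ∀ i, f (x i) = φ (x i)} : ℝ)) /
        (Fintype.card G : ℝ) ^ k := by
        congr 1
        exact_mod_cast sum_card_bipartiteAbove_eq_sum_card_bipartiteBelow (s := univ) (t := univ)
          (r := fun (φ : MulAut G) (x : Fin k → G) => ∀ i, f (x i) = φ (x i))
    _ = _ := by
        simp only [MulAut.card_filter_forall_apply_eq, Nat.cast_ite, Nat.cast_zero,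
          Fintype.card_pi_const]
        push_cast
        rfl
end

section
/- Let p > 3 be prime and G = D_{2p} the dihedral group of order 2p. Then for any k ≥ 2, p^k·((p-1) + 2^k) ≤ ∑_{φ ∈ Aut(G)} |Fix(φ)|^k ≤ p^k·((p-1) + 2^{k+1}). More precisely, ∑_{φ ∈ Aut(G)} |Fix(φ)|^k = (p-1)·p^k + 2^k·(p(p-2) + p^k). -/
open DihedralGroup
variable {p : ℕ}

def dAut (l : (ZMod p)ˣ) (m : ZMod p) : MulAut (DihedralGroup p) where
  toFun x := match x with
    | .r i => .r (l * i)
    | .sr i => .sr (l * i + m)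
  invFun x := match x with
    | .r i => .r ((l⁻¹ : (ZMod p)ˣ) * i)
    | .sr i => .sr ((l⁻¹ : (ZMod p)ˣ) * (i - m))
  left_inv := by rintro (i | i) <;> simp
  right_inv := by rintro (i | i) <;> simp
  map_mul' := by rintro (i | i) (j | j) <;> simp <;> ring

@[simp] lemma dAut_r (l : (ZMod p)ˣ) (m i : ZMod p) : dAut l m (.r i) = .r (l * i) := rfl
@[simp] lemma dAut_sr (l : (ZMod p)ˣ) (m i : ZMod p) : dAut l m (.sr i) = .sr (l * i + m) := rfl

lemma r_pow (a : ZMod p) (n : ℕ) : (DihedralGroup.r a) ^ n = .r (n * a) := by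
  induction n with
  | zero => simp
  | succ n ih => rw [pow_succ, ih, r_mul_r]; push_cast; ring_nf

lemma dAut_bij (hp : p.Prime) (hp2 : p ≠ 2) :
    Function.Bijective (fun q : (ZMod p)ˣ × ZMod p => dAut q.1 q.2) := by
  have : Fact p.Prime := ⟨hp⟩
  constructor
  · rintro ⟨l, m⟩ ⟨l', m'⟩ h
    have h' : dAut l m = dAut l' m' := h
    have h1 : dAut l m (.r 1) = dAut l' m' (.r 1) := by rw [h']
    have h2 : dAut l m (.sr 0) = dAut l' m' (.sr 0) := by rw [h']
    simp only [dAut_r, dAut_sr, mul_one, mul_zero, zero_add] at h1 h2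
    have hl : (l : ZMod p) = l' := by injection h1
    have hm : m = m' := by injection h2
    simp [Prod.ext_iff, Units.ext_iff, hl, hm]
  · intro φ
    have hord : orderOf (φ (DihedralGroup.r 1)) = p := by
      rw [MulEquiv.orderOf_eq, orderOf_r_one]
    have hord2 : orderOf (φ (DihedralGroup.sr 0)) = 2 := by
      rw [MulEquiv.orderOf_eq, orderOf_sr]
    obtain ⟨l0, hl0⟩ : ∃ l0, φ (DihedralGroup.r 1) = .r l0 := by
      rcases h : φ (DihedralGroup.r 1) with i | i
      · exact ⟨i, rfl⟩
      · rw [h, orderOf_sr] at hord; omega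
    obtain ⟨m, hm⟩ : ∃ m, φ (DihedralGroup.sr 0) = .sr m := by
      rcases h : φ (DihedralGroup.sr 0) with i | i
      · exfalso
        rw [h] at hord2
        have hdvd : orderOf (DihedralGroup.r i : DihedralGroup p) ∣ p := by
          have : NeZero p := ⟨hp.ne_zero⟩
          apply orderOf_dvd_of_pow_eq_one
          rw [_root_.r_pow, ZMod.natCast_self, zero_mul, one_def]
        rw [hord2] at hdvd
        exact hp2 ((Nat.prime_dvd_prime_iff_eq Nat.prime_two hp).mp hdvd).symm
      · exact ⟨i, rfl⟩
    have hl0ne : l0 ≠ 0 := by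
      intro h0
      rw [h0, ← one_def] at hl0
      rw [hl0, orderOf_one] at hord
      exact absurd hord.symm hp.one_lt.ne'
    have key : ∀ i : ZMod p, φ (.r i) = .r (l0 * i) := by
      intro i
      have : NeZero p := ⟨hp.ne_zero⟩
      have hi : (DihedralGroup.r i : DihedralGroup p) = (DihedralGroup.r 1) ^ i.val := by
        rw [r_one_pow, ZMod.natCast_zmod_val]
      rw [hi, map_pow, hl0, _root_.r_pow, ZMod.natCast_zmod_val, mul_comm]
    refine ⟨⟨Units.mk0 l0 hl0ne, m⟩, ?_⟩
    show dAut (Units.mk0 l0 hl0ne) m = φ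
    ext x
    rcases x with i | i
    · simp [key i]
    · have hsi : (DihedralGroup.sr i : DihedralGroup p) = .sr 0 * .r i := by simp
      rw [hsi, map_mul, map_mul, hm, key i]
      simp [add_comm]
def fixEquiv (l : (ZMod p)ˣ) (m : ZMod p) :
    {x : DihedralGroup p // dAut l m x = x} ≃
      {i : ZMod p // (l : ZMod p) * i = i} ⊕ {i : ZMod p // (l : ZMod p) * i + m = i} where
  toFun x := match x with
    | ⟨.r i, h⟩ => Sum.inl ⟨i, by simpa using h⟩
    | ⟨.sr i, h⟩ => Sum.inr ⟨i, by simpa using h⟩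
  invFun x := match x with
    | Sum.inl ⟨i, h⟩ => ⟨.r i, by simp [h]⟩
    | Sum.inr ⟨i, h⟩ => ⟨.sr i, by simp [h]⟩
  left_inv := by rintro ⟨i | i, h⟩ <;> rfl
  right_inv := by rintro (⟨i, h⟩ | ⟨i, h⟩) <;> rfl

lemma lin_card [Fact p.Prime] (a b : ZMod p) :
    Nat.card {i : ZMod p // a * i = b} =
      if a = 0 then (if b = 0 then p else 0) else 1 := by
  rcases eq_or_ne a 0 with rfl | ha
  · rcases eq_or_ne b 0 with rfl | hb
    · rw [Nat.card_congr (Equiv.subtypeUnivEquiv (by simp)), Nat.card_zmod]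
      simp
    · have he : IsEmpty {i : ZMod p // (0 : ZMod p) * i = b} :=
        ⟨fun ⟨i, hi⟩ => hb (by simpa using hi.symm)⟩
      rw [Nat.card_of_isEmpty]
      simp [hb]
  · rw [if_neg ha]
    have : ∀ i : ZMod p, a * i = b ↔ i = a⁻¹ * b := by
      intro i
      constructor
      · rintro rfl; field_simp
      · rintro rfl; field_simp
    rw [Nat.card_congr (Equiv.subtypeEquivRight this), Nat.card_eq_fintype_card,
      Fintype.card_subtype_eq]

lemma fix_card [Fact p.Prime] (l : (ZMod p)ˣ) (m : ZMod p) :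
    Nat.card {x : DihedralGroup p // dAut l m x = x} =
      if l = 1 then (if m = 0 then 2 * p else p) else 2 := by
  rw [Nat.card_congr (fixEquiv l m), Nat.card_sum]
  have e1 : ∀ i : ZMod p, (l : ZMod p) * i = i ↔ ((l : ZMod p) - 1) * i = 0 := by
    intro i; rw [sub_mul, one_mul, sub_eq_zero]
  have e2 : ∀ i : ZMod p, (l : ZMod p) * i + m = i ↔ (1 - (l : ZMod p)) * i = m := by
    intro i; rw [sub_mul, one_mul]; constructor <;> intro h <;> linear_combination -h
  rw [Nat.card_congr (Equiv.subtypeEquivRight e1), Nat.card_congr (Equiv.subtypeEquivRight e2),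
    lin_card, lin_card]
  have hco : (l = 1) ↔ ((l : ZMod p) = 1) := by
    constructor
    · rintro rfl; rfl
    · intro h; exact Units.ext h
  rcases eq_or_ne l 1 with rfl | hl
  · simp only [if_pos rfl, Units.val_one, sub_self, if_pos rfl]
    rcases eq_or_ne m 0 with rfl | hm
    · simp [two_mul]
    · simp [hm]
  · have h1 : (l : ZMod p) - 1 ≠ 0 := by
      intro h; exact hl (Units.val_eq_one.mp (by linear_combination h))
    have h2 : 1 - (l : ZMod p) ≠ 0 := by
      intro h; exact hl (Units.val_eq_one.mp (by linear_combination -h))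
    simp [if_neg hl, if_neg h1, if_neg h2]
lemma sum_ite_eq_card {α : Type*} [Fintype α] [DecidableEq α] (a : α) (A B : ℕ) :
    ∑ x : α, (if x = a then A else B) = A + (Fintype.card α - 1) * B := by
  rw [Finset.sum_eq_add_sum_sdiff_singleton_of_mem (Finset.mem_univ a)]
  rw [if_pos rfl]
  congr 1
  rw [Finset.sum_congr rfl (fun x hx => by
    rw [if_neg]
    simp only [Finset.mem_sdiff, Finset.mem_singleton] at hx
    exact hx.2)]
  rw [Finset.sum_const, smul_eq_mul]
  congr 1
  rw [Finset.card_sdiff_of_subset (by simp), Finset.card_singleton, Finset.card_univ]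

/-- For `p > 3` prime, `G = D_{2p}` the dihedral group of order `2p`, and
`k ≥ 2`: `∑_{φ ∈ Aut(G)} |Fix(φ)|^k = (p-1)·p^k + 2^k·(p(p-2) + p^k)`, and this quantity
lies between `p^k·((p-1) + 2^k)` and `p^k·((p-1) + 2^{k+1})`. -/
theorem dihedral_fix_pow_sum
    (p : ℕ) (hp : p.Prime) (hp3 : 3 < p) (k : ℕ) (hk : 2 ≤ k)
    [Fintype (MulAut (DihedralGroup p))] :
    (∑ φ : MulAut (DihedralGroup p), (Nat.card {x : DihedralGroup p // φ x = x}) ^ k)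
        = (p - 1) * p ^ k + 2 ^ k * (p * (p - 2) + p ^ k)
    ∧ p ^ k * ((p - 1) + 2 ^ k)
        ≤ ∑ φ : MulAut (DihedralGroup p), (Nat.card {x : DihedralGroup p // φ x = x}) ^ k
    ∧ (∑ φ : MulAut (DihedralGroup p), (Nat.card {x : DihedralGroup p // φ x = x}) ^ k)
        ≤ p ^ k * ((p - 1) + 2 ^ (k + 1)) := by
  have hF : Fact p.Prime := ⟨hp⟩
  have hNZ : NeZero p := ⟨hp.ne_zero⟩
  have hmain : (∑ φ : MulAut (DihedralGroup p), (Nat.card {x : DihedralGroup p // φ x = x}) ^ k)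
      = (p - 1) * p ^ k + 2 ^ k * (p * (p - 2) + p ^ k) := by
    rw [← Fintype.sum_bijective _ (dAut_bij hp (by omega))
      (fun q : (ZMod p)ˣ × ZMod p => (Nat.card {x : DihedralGroup p // dAut q.1 q.2 x = x}) ^ k)
      _ (fun q => rfl)]
    have step : ∀ q : (ZMod p)ˣ × ZMod p,
        (Nat.card {x : DihedralGroup p // dAut q.1 q.2 x = x}) ^ k
          = if q.1 = 1 then (if q.2 = 0 then (2 * p) ^ k else p ^ k) else 2 ^ k := by
      rintro ⟨l, m⟩
      rw [fix_card]
      rcases eq_or_ne l 1 with rfl | hl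
      · rcases eq_or_ne m 0 with rfl | hm
        · simp
        · simp [hm]
      · simp [hl]
    rw [Finset.sum_congr rfl (fun q _ => step q), Fintype.sum_prod_type]
    have inner : ∀ l : (ZMod p)ˣ,
        (∑ m : ZMod p, if l = 1 then (if m = 0 then (2 * p) ^ k else p ^ k) else 2 ^ k)
          = if l = 1 then ((2 * p) ^ k + (p - 1) * p ^ k) else p * 2 ^ k := by
      intro l
      rcases eq_or_ne l 1 with rfl | hl
      · simp only [eq_self_iff_true, if_true]
        rw [sum_ite_eq_card 0 ((2 * p) ^ k) (p ^ k), ZMod.card]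
      · simp only [if_neg hl, Finset.sum_const, Finset.card_univ, ZMod.card, smul_eq_mul]
    rw [Finset.sum_congr rfl (fun l _ => inner l),
      sum_ite_eq_card 1 ((2 * p) ^ k + (p - 1) * p ^ k) (p * 2 ^ k)]
    have hcardu : Fintype.card (ZMod p)ˣ = p - 1 := by
      rw [ZMod.card_units_eq_totient, Nat.totient_prime hp]
    rw [hcardu]
    have h2 : p - 1 - 1 = p - 2 := by omega
    rw [h2, mul_pow]
    generalize p ^ k = A
    generalize 2 ^ k = B
    generalize p - 1 = c
    generalize p - 2 = d
    ring
  refine ⟨hmain, ?_, ?_⟩ <;> rw [hmain]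
  · have : p ^ k * ((p - 1) + 2 ^ k) = (p - 1) * p ^ k + 2 ^ k * p ^ k := by ring
    rw [this]
    exact Nat.add_le_add_left (Nat.mul_le_mul_left _ (Nat.le_add_left _ _)) _
  · have hpd : p * (p - 2) ≤ p ^ k := by
      calc p * (p - 2) ≤ p * p := Nat.mul_le_mul_left p (by omega)
        _ = p ^ 2 := (sq p).symm
        _ ≤ p ^ k := Nat.pow_le_pow_right (by omega) hk
    have : p ^ k * ((p - 1) + 2 ^ (k + 1)) = (p - 1) * p ^ k + 2 ^ k * (p ^ k + p ^ k) := by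
      rw [pow_succ]; ring
    rw [this]
    refine Nat.add_le_add_left (Nat.mul_le_mul_left _ ?_) _
    omega
end

section
/- Let G be a finite group whose every nontrivial irreducible complex representation has dimension at least D (G is D-quasirandom). Then every proper subgroup H of G satisfies |H| ≤ |G| / D. -/
/-!
`G` permutes the functions `G ⧸ H → ℂ`, and since `H` is proper the functions with zero sum form
a nonzero invariant subspace. By finite-dimensionality it contains a minimal nonzero invariant
subspace, i.e. an irreducible subrepresentation. That subrepresentation is nontrivial: a vector
fixed by `G` is constant on the single orbit `G ⧸ H`, and a constant with zero sum vanishes in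
characteristic zero. Quasirandomness then gives `D ≤ dim ≤ |G ⧸ H| = |G| / |H|`.
-/

open Module Representation

namespace Subrepresentation

variable {k G V : Type*} [Field k] [Monoid G] [AddCommGroup V] [Module k V]
  {ρ : Representation k G V}

instance [IsArtinian k V] : WellFoundedLT (Subrepresentation ρ) :=
  (show StrictMono (toSubmodule : Subrepresentation ρ → Submodule k V) from
    fun _ _ h => h).wellFoundedLT

theorem eq_bot_or_eq_top_of_isAtom {σ : Subrepresentation ρ} (hσ : IsAtom σ)
    (W : Submodule k σ.toSubmodule)
    (hW : ∀ (g : G) (v : σ.toSubmodule), v ∈ W → σ.toRepresentation g v ∈ W) :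
    W = ⊥ ∨ W = ⊤ := by
  let τ : Subrepresentation ρ :=
    ⟨W.map σ.toSubmodule.subtype, by
      rintro g _ ⟨v, hv, rfl⟩
      exact ⟨_, hW g v hv, rfl⟩⟩
  have hinj := Submodule.map_injective_of_injective σ.toSubmodule.injective_subtype
  refine (hσ.le_iff.mp (show τ ≤ σ from Submodule.map_subtype_le _ W)).imp
    (fun h => hinj ?_) (fun h => hinj ?_)
  · rw [Submodule.map_bot]; exact congrArg toSubmodule h
  · rw [Submodule.map_subtype_top]; exact congrArg toSubmodule h

end Subrepresentation

namespace Representation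

variable {k G X : Type*} [Group G] [MulAction G X]

section CommSemiring

variable (k G X) [CommSemiring k]

/-- For `X = G ⧸ H` this is the quasiregular representation `L²(G/H)`. -/
def ofMulActionFun : Representation k G (X → k) where
  toFun g := LinearMap.funLeft k k (g⁻¹ • ·)
  map_one' := by ext; simp
  map_mul' g h := by ext; simp [mul_smul]

variable {k G X}

@[simp]
theorem ofMulActionFun_apply (g : G) (f : X → k) (x : X) :
    ofMulActionFun k G X g f x = f (g⁻¹ • x) := rfl

theorem apply_eq_apply_of_forall_ofMulActionFun_eq [MulAction.IsPretransitive G X] {f : X → k}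
    (hf : ∀ g : G, ofMulActionFun k G X g f = f) (x y : X) : f x = f y := by
  obtain ⟨g, rfl⟩ := MulAction.exists_smul_eq G x y
  simpa using congrFun (hf g) (g • x)

variable (k G X) [Fintype X]

def sumZero : Subrepresentation (ofMulActionFun k G X) where
  toSubmodule :=
    { carrier := {f | ∑ x, f x = 0}
      add_mem' := by simp_all [Finset.sum_add_distrib]
      zero_mem' := by simp
      smul_mem' := by simp_all [← Finset.mul_sum] }
  apply_mem_toSubmodule g f (hf : ∑ x, f x = 0) :=
    show ∑ x, f (g⁻¹ • x) = 0 from Equiv.sum_comp (MulAction.toPerm g⁻¹) f ▸ hf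

variable {k G X}

theorem mem_sumZero {f : X → k} : f ∈ sumZero k G X ↔ ∑ x, f x = 0 := Iff.rfl

end CommSemiring

theorem sumZero_ne_bot [CommRing k] [Nontrivial k] [Fintype X] [Nontrivial X] :
    sumZero k G X ≠ ⊥ := by
  classical
  obtain ⟨x, y, hxy⟩ := exists_pair_ne X
  intro h
  have hmem : Pi.single x 1 - Pi.single y 1 ∈ sumZero k G X := by
    simp [mem_sumZero]
  rw [h] at hmem
  simpa [hxy] using congrFun (sub_eq_zero.mp hmem) x

section Transitive

variable [Field k] [CharZero k] [Fintype X] [MulAction.IsPretransitive G X]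

theorem exists_ofMulActionFun_apply_ne {f : X → k} (hf : f ∈ sumZero k G X) (hf0 : f ≠ 0) :
    ∃ g : G, ofMulActionFun k G X g f ≠ f := by
  by_contra! hfix
  obtain ⟨x₀, -⟩ := Function.ne_iff.mp hf0
  have : Nonempty X := ⟨x₀⟩
  have hconst := apply_eq_apply_of_forall_ofMulActionFun_eq hfix
  have hsum : (Fintype.card X : k) * f x₀ = 0 := by
    simpa [mem_sumZero, hconst _ x₀] using hf
  have hx₀ : f x₀ = 0 :=
    (mul_eq_zero.mp hsum).resolve_left (Nat.cast_ne_zero.mpr Fintype.card_ne_zero)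
  exact hf0 (funext fun x => (hconst x x₀).trans hx₀)

theorem exists_apply_ne_of_le_sumZero {σ : Subrepresentation (ofMulActionFun k G X)}
    (hσ : σ ≠ ⊥) (hσ_le : σ ≤ sumZero k G X) :
    ∃ (g : G) (v : σ.toSubmodule), σ.toRepresentation g v ≠ v := by
  obtain ⟨f, hf, hf0⟩ := (Submodule.ne_bot_iff σ.toSubmodule).mp
    fun h => hσ (Subrepresentation.toSubmodule_injective h)
  obtain ⟨g, hg⟩ := exists_ofMulActionFun_apply_ne (hσ_le hf) hf0
  exact ⟨g, ⟨f, hf⟩, fun h => hg (congrArg Subtype.val h)⟩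

end Transitive

end Representation

/-- If every nontrivial irreducible complex representation of a finite
group `G` has dimension at least `D` (`G` is `D`-quasirandom), then every proper
subgroup `H < G` satisfies `|H| ≤ |G| / D`. -/
theorem quasirandom_proper_subgroup_bound
    {G : Type} [Group G] [Fintype G] (D : ℕ) (hD : 0 < D)
    (hquasi : ∀ (V : Type) [AddCommGroup V] [Module ℂ V] [FiniteDimensional ℂ V]
      (ρ : Representation ℂ G V),
        (∀ W : Submodule ℂ V, (∀ (g : G) (v : V), v ∈ W → ρ g v ∈ W) → W = ⊥ ∨ W = ⊤) →
        (∃ (g : G) (v : V), ρ g v ≠ v) →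
        D ≤ Module.finrank ℂ V) :
    ∀ H : Subgroup G, H ≠ ⊤ → (Nat.card H : ℝ) ≤ (Nat.card G : ℝ) / (D : ℝ) := by
  intro H hH
  have : Nontrivial (G ⧸ H) := QuotientGroup.nontrivial_iff.mpr hH
  have : Fintype (G ⧸ H) := Fintype.ofFinite _
  obtain ⟨σ, hσ, hσ_le⟩ : ∃ σ, IsAtom σ ∧ σ ≤ sumZero ℂ G (G ⧸ H) :=
    (eq_bot_or_exists_atom_le _).resolve_left sumZero_ne_bot
  have hD_index : D ≤ H.index :=
    calc D ≤ finrank ℂ σ.toSubmodule :=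
          hquasi _ σ.toRepresentation (Subrepresentation.eq_bot_or_eq_top_of_isAtom hσ)
            (exists_apply_ne_of_le_sumZero hσ.ne_bot hσ_le)
      _ ≤ finrank ℂ (G ⧸ H → ℂ) := σ.toSubmodule.finrank_le
      _ = H.index := by
          rw [finrank_fintype_fun_eq_card, H.index_eq_card, Nat.card_eq_fintype_card]
  rw [le_div_iff₀ (by exact_mod_cast hD)]
  exact_mod_cast (Nat.mul_le_mul_left _ hD_index).trans_eq H.card_mul_index
end
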